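/- Let a > 0, β > 0, ν a nonzero real number, and define h(z) = (a/2)·sinh(a(z + ν)/2)/( sinh(az/2)·sinh(aν/2) ). Then for all z ∈ ℂ at which all the functions below are defined, the factorisation identity h(−z)·h(z − iβ) = h(−iβ)·( F₁(z − iβ) − F₁(z) − F₁(ν − iβ) + F₁(ν) ) holds, where F₁(z) = (a/2)·coth(az/2) is an antiderivative of F(z) = −(a²/4)/sinh²(az/2); equivalently, h(−z)h(z−iβ) = h(−iβ)·(a/2)·( coth(a(z − iβ)/2) − coth(az/2) ) + A(β,ν) with A(β,ν) chosen so that the left side vanishes at z = ν. -/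

import Mathlib

/-- The hyperbolic Ruijsenaars solution
`h(z) = (a/2)·sinh(a(z + ν)/2)/(sinh(az/2)·sinh(aν/2))`. -/
noncomputable def hHyp (a ν : ℝ) (z : ℂ) : ℂ :=
  ((a : ℂ) / 2) * Complex.sinh ((a : ℂ) * (z + (ν : ℂ)) / 2) /
    (Complex.sinh ((a : ℂ) * z / 2) * Complex.sinh ((a : ℂ) * (ν : ℂ) / 2))

/-- `F₁(z) = (a/2)·coth(az/2)`, an antiderivative of `F(z) = −(a²/4)/sinh²(az/2)`. -/
noncomputable def F1Hyp (a : ℝ) (z : ℂ) : ℂ :=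
  ((a : ℂ) / 2) * Complex.cosh ((a : ℂ) * z / 2) / Complex.sinh ((a : ℂ) * z / 2)

open Complex

private lemma sinh_exp (w : ℂ) : Complex.sinh w = (cexp w ^ 2 - 1) / (2 * cexp w) := by
  rw [Complex.sinh, Complex.exp_neg]
  field_simp [Complex.exp_ne_zero]

private lemma cosh_exp (w : ℂ) : Complex.cosh w = (cexp w ^ 2 + 1) / (2 * cexp w) := by
  rw [Complex.cosh, Complex.exp_neg]
  field_simp [Complex.exp_ne_zero]

set_option maxHeartbeats 4000000 in
private lemma alg (x y m : ℂ) (hx : x ≠ 0) (hy : y ≠ 0) (hm : m ≠ 0)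
    (h1 : x ^ 2 - 1 ≠ 0) (h2 : x ^ 2 - y ^ 2 ≠ 0) (h3 : y ^ 2 - 1 ≠ 0)
    (h4 : m ^ 2 - 1 ≠ 0) (h5 : m ^ 2 - y ^ 2 ≠ 0) :
    ((m ^ 2 - x ^ 2) / (2 * m * x)) /
        (((1 - x ^ 2) / (2 * x)) * ((m ^ 2 - 1) / (2 * m))) *
      (((x ^ 2 * m ^ 2 - y ^ 2) / (2 * x * m * y)) /
        (((x ^ 2 - y ^ 2) / (2 * x * y)) * ((m ^ 2 - 1) / (2 * m)))) =
    ((m ^ 2 - y ^ 2) / (2 * m * y)) /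
        (((1 - y ^ 2) / (2 * y)) * ((m ^ 2 - 1) / (2 * m))) *
      ((x ^ 2 + y ^ 2) / (x ^ 2 - y ^ 2) - (x ^ 2 + 1) / (x ^ 2 - 1) -
        (m ^ 2 + y ^ 2) / (m ^ 2 - y ^ 2) + (m ^ 2 + 1) / (m ^ 2 - 1)) := by
  have h6 : (1 : ℂ) - x ^ 2 ≠ 0 := by intro h; apply h1; linear_combination -h
  have h7 : (1 : ℂ) - y ^ 2 ≠ 0 := by intro h; apply h3; linear_combination -h
  field_simp
  ring

set_option maxHeartbeats 1000000 in
lemma key_hyp_fact (s b n : ℂ) (hs : Complex.sinh s ≠ 0) (hsb : Complex.sinh (s - b) ≠ 0)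
    (hb : Complex.sinh b ≠ 0) (hn : Complex.sinh n ≠ 0)
    (hnb : Complex.sinh (n - b) ≠ 0) :
    (Complex.sinh (n - s) / (Complex.sinh (-s) * Complex.sinh n)) *
      (Complex.sinh (s - b + n) / (Complex.sinh (s - b) * Complex.sinh n)) =
    (Complex.sinh (n - b) / (Complex.sinh (-b) * Complex.sinh n)) *
      (Complex.cosh (s - b) / Complex.sinh (s - b) - Complex.cosh s / Complex.sinh s -
        Complex.cosh (n - b) / Complex.sinh (n - b) + Complex.cosh n / Complex.sinh n) := by
  have hx : cexp s ≠ 0 := Complex.exp_ne_zero s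
  have hy : cexp b ≠ 0 := Complex.exp_ne_zero b
  have hm : cexp n ≠ 0 := Complex.exp_ne_zero n
  have e5 : Complex.sinh (s - b) = (cexp s ^ 2 - cexp b ^ 2) / (2 * cexp s * cexp b) := by
    rw [eq_div_iff (by apply_rules [mul_ne_zero, two_ne_zero]), Complex.sinh,
      Complex.exp_neg, Complex.exp_sub]
    field_simp
  have e7 : Complex.sinh (n - b) = (cexp n ^ 2 - cexp b ^ 2) / (2 * cexp n * cexp b) := by
    rw [eq_div_iff (by apply_rules [mul_ne_zero, two_ne_zero]), Complex.sinh,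
      Complex.exp_neg, Complex.exp_sub]
    field_simp
  have h1 : cexp s ^ 2 - 1 ≠ 0 := by
    intro h; apply hs; rw [sinh_exp, h, zero_div]
  have h2 : cexp s ^ 2 - cexp b ^ 2 ≠ 0 := by
    intro h; apply hsb; rw [e5, h, zero_div]
  have h3 : cexp b ^ 2 - 1 ≠ 0 := by
    intro h; apply hb; rw [sinh_exp, h, zero_div]
  have h4 : cexp n ^ 2 - 1 ≠ 0 := by
    intro h; apply hn; rw [sinh_exp, h, zero_div]
  have h5 : cexp n ^ 2 - cexp b ^ 2 ≠ 0 := by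
    intro h; apply hnb; rw [e7, h, zero_div]
  have e1 : Complex.sinh (n - s) = (cexp n ^ 2 - cexp s ^ 2) / (2 * cexp n * cexp s) := by
    rw [eq_div_iff (by apply_rules [mul_ne_zero, two_ne_zero]), Complex.sinh,
      Complex.exp_neg, Complex.exp_sub]
    field_simp
  have e2 : Complex.sinh (-s) = (1 - cexp s ^ 2) / (2 * cexp s) := by
    rw [eq_div_iff (by apply_rules [mul_ne_zero, two_ne_zero]), Complex.sinh,
      Complex.exp_neg, neg_neg]
    field_simp
  have e3 : Complex.sinh n = (cexp n ^ 2 - 1) / (2 * cexp n) := sinh_exp n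
  have e4 : Complex.sinh (s - b + n) =
      (cexp s ^ 2 * cexp n ^ 2 - cexp b ^ 2) / (2 * cexp s * cexp n * cexp b) := by
    rw [eq_div_iff (by apply_rules [mul_ne_zero, two_ne_zero]), Complex.sinh,
      Complex.exp_neg, Complex.exp_add, Complex.exp_sub]
    field_simp
  have e6 : Complex.sinh (-b) = (1 - cexp b ^ 2) / (2 * cexp b) := by
    rw [eq_div_iff (by apply_rules [mul_ne_zero, two_ne_zero]), Complex.sinh,
      Complex.exp_neg, neg_neg]
    field_simp
  have c1 : Complex.cosh (s - b) / Complex.sinh (s - b) =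
      (cexp s ^ 2 + cexp b ^ 2) / (cexp s ^ 2 - cexp b ^ 2) := by
    rw [div_eq_div_iff hsb h2, Complex.cosh, Complex.sinh, Complex.exp_neg, Complex.exp_sub]
    field_simp
  have c2 : Complex.cosh s / Complex.sinh s = (cexp s ^ 2 + 1) / (cexp s ^ 2 - 1) := by
    rw [div_eq_div_iff hs h1, Complex.cosh, Complex.sinh, Complex.exp_neg]
    field_simp
  have c3 : Complex.cosh (n - b) / Complex.sinh (n - b) =
      (cexp n ^ 2 + cexp b ^ 2) / (cexp n ^ 2 - cexp b ^ 2) := by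
    rw [div_eq_div_iff hnb h5, Complex.cosh, Complex.sinh, Complex.exp_neg, Complex.exp_sub]
    field_simp
  have c4 : Complex.cosh n / Complex.sinh n = (cexp n ^ 2 + 1) / (cexp n ^ 2 - 1) := by
    rw [div_eq_div_iff hn h4, Complex.cosh, Complex.sinh, Complex.exp_neg]
    field_simp
  rw [c1, c2, c3, c4, e1, e2, e3, e4, e5, e6, e7]
  exact alg (cexp s) (cexp b) (cexp n) hx hy hm h1 h2 h3 h4 h5

lemma sinh_ne_zero_of_re_ne_zero' (z : ℂ) (h : z.re ≠ 0) : Complex.sinh z ≠ 0 := by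
  intro h0
  rw [Complex.sinh, div_eq_zero_iff, sub_eq_zero] at h0
  rcases h0 with h0 | h0
  · have h1 := congrArg (‖·‖) h0
    simp only [Complex.norm_exp] at h1
    have h2 := Real.exp_injective h1
    simp only [Complex.neg_re] at h2
    exact h (by linarith)
  · norm_num at h0

/-- The factorisation identity
`h(−z)·h(z − iβ) = h(−iβ)·(F₁(z − iβ) − F₁(z) − F₁(ν − iβ) + F₁(ν))`
for the hyperbolic solution, at every `z` where all functions are defined. -/
theorem hyperbolic_factorisation (a β ν : ℝ) (ha : 0 < a) (hβ : 0 < β)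
    (hν : ν ≠ 0) (hβa : Complex.sinh ((a : ℂ) * (Complex.I * (β : ℂ)) / 2) ≠ 0) :
    ∀ z : ℂ, Complex.sinh ((a : ℂ) * z / 2) ≠ 0 →
      Complex.sinh ((a : ℂ) * (z - Complex.I * (β : ℂ)) / 2) ≠ 0 →
      hHyp a ν (-z) * hHyp a ν (z - Complex.I * (β : ℂ)) =
        hHyp a ν (-(Complex.I * (β : ℂ))) *
          (F1Hyp a (z - Complex.I * (β : ℂ)) - F1Hyp a z -
            F1Hyp a ((ν : ℂ) - Complex.I * (β : ℂ)) + F1Hyp a (ν : ℂ)) := by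
  intro z hs hzb
  set s : ℂ := (a : ℂ) * z / 2 with hs_def
  set b : ℂ := (a : ℂ) * (Complex.I * (β : ℂ)) / 2 with hb_def
  set n : ℂ := (a : ℂ) * (ν : ℂ) / 2 with hn_def
  have haν : a * ν / 2 ≠ 0 := by
    apply div_ne_zero (mul_ne_zero (ne_of_gt ha) hν) two_ne_zero
  have hn_eq : n = ((a * ν / 2 : ℝ) : ℂ) := by rw [hn_def]; push_cast; ring
  have hn0 : Complex.sinh n ≠ 0 := by
    apply sinh_ne_zero_of_re_ne_zero'
    rw [hn_eq, Complex.ofReal_re]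
    exact haν
  have hb_re : b.re = 0 := by
    rw [hb_def]
    simp [Complex.div_re, Complex.mul_re]
  have hnb0 : Complex.sinh (n - b) ≠ 0 := by
    apply sinh_ne_zero_of_re_ne_zero'
    rw [Complex.sub_re, hb_re, hn_eq, Complex.ofReal_re, sub_zero]
    exact haν
  have hsb0 : Complex.sinh (s - b) ≠ 0 := by
    have h : s - b = (a : ℂ) * (z - Complex.I * (β : ℂ)) / 2 := by rw [hs_def, hb_def]; ring
    rw [h]; exact hzb
  have hkey := key_hyp_fact s b n hs hsb0 hβa hn0 hnb0
  unfold hHyp F1Hyp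
  rw [show (a : ℂ) * (-z + (ν : ℂ)) / 2 = n - s by rw [hs_def, hn_def]; ring,
    show (a : ℂ) * (-z) / 2 = -s by rw [hs_def]; ring,
    show (a : ℂ) * ((z - Complex.I * (β : ℂ)) + (ν : ℂ)) / 2 = s - b + n by
      rw [hs_def, hb_def, hn_def]; ring,
    show (a : ℂ) * (z - Complex.I * (β : ℂ)) / 2 = s - b by rw [hs_def, hb_def]; ring,
    show (a : ℂ) * (-(Complex.I * (β : ℂ)) + (ν : ℂ)) / 2 = n - b by
      rw [hb_def, hn_def]; ring,
    show (a : ℂ) * (-(Complex.I * (β : ℂ))) / 2 = -b by rw [hb_def]; ring,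
    show (a : ℂ) * ((ν : ℂ) - Complex.I * (β : ℂ)) / 2 = n - b by
      rw [hb_def, hn_def]; ring]
  linear_combination ((a : ℂ) / 2) ^ 2 * hkey
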